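/- Let F be a finite field with q elements, and suppose α₁, α₂ ∈ F are distinct. Then the number of 3×3 matrices over F that are diagonalizable with both α₁ and α₂ as eigenvalues and no other eigenvalues equals 2q⁴ + 2q³ + 2q². -/

import Mathlib

/-!
A matrix diagonalizable with eigenvalue set `{a, b}` is conjugate, by a permutation matrix, to
`diag(a, a, b)` or to `diag(b, b, a)`; these two conjugacy classes are different because their
traces `2a + b` and `2b + a` are. The centralizer of `diag(a, a, b)` in `GL₃` consists of the
block-diagonal matrices `GL₂ × GL₁`, so by orbit–stabilizer each class has
`|GL₃| / (|GL₂| |GL₁|) = q⁴ + q³ + q²` elements.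
-/

open Matrix MulAction

section Conjugation

variable {M N : Type*} [Monoid M] [Monoid N]

theorem mem_orbit_conjAct_units_iff {x y : M} :
    y ∈ orbit (ConjAct Mˣ) x ↔ ∃ P : Mˣ, y = P * x * ↑P⁻¹ := by
  constructor
  · rintro ⟨g, rfl⟩
    exact ⟨ConjAct.ofConjAct g, ConjAct.units_smul_def g x⟩
  · rintro ⟨P, rfl⟩
    exact ⟨ConjAct.toConjAct P, by simp [ConjAct.units_smul_def]⟩

theorem mem_stabilizer_conjAct_units_iff {g : ConjAct Mˣ} {x : M} :
    g ∈ stabilizer (ConjAct Mˣ) x ↔ Commute ((ConjAct.ofConjAct g : Mˣ) : M) x := by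
  rw [mem_stabilizer_iff, ConjAct.units_smul_def, Units.mul_inv_eq_iff_eq_mul]
  rfl

theorem MulEquiv.image_orbit_conjAct (f : M ≃* N) (x : M) :
    f '' orbit (ConjAct Mˣ) x = orbit (ConjAct Nˣ) (f x) := by
  ext y
  simp only [Set.mem_image, mem_orbit_conjAct_units_iff]
  constructor
  · rintro ⟨_, ⟨P, rfl⟩, rfl⟩
    exact ⟨Units.map f P, by simp⟩
  · rintro ⟨P, rfl⟩
    exact ⟨_, ⟨Units.map f.symm P, rfl⟩, by simp⟩

end Conjugation

namespace Matrix

section Diagonal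

variable {n R : Type*} [Fintype n] [DecidableEq n]

theorem commute_diagonal_iff [CommRing R] [NoZeroDivisors R] {M : Matrix n n R} {d : n → R} :
    Commute M (diagonal d) ↔ ∀ i j, d i ≠ d j → M i j = 0 := by
  simp only [Commute, SemiconjBy, ← Matrix.ext_iff, mul_diagonal, diagonal_mul]
  refine forall₂_congr fun i j => ⟨fun h hne => ?_, fun h => ?_⟩
  · have : M i j * (d j - d i) = 0 := by linear_combination h
    exact (mul_eq_zero.1 this).resolve_right (sub_ne_zero.2 hne.symm)
  · by_cases hd : d i = d j
    · rw [hd, mul_comm]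
    · rw [h hd, zero_mul, mul_zero]

theorem diagonal_comp_perm_mem_orbit [CommRing R] (d : n → R) (σ : Equiv.Perm n) :
    diagonal (d ∘ σ) ∈ orbit (ConjAct (Matrix n n R)ˣ) (diagonal d) := by
  rw [mem_orbit_conjAct_units_iff]
  refine ⟨permMatrixHom.toHomUnits σ⁻¹, ?_⟩
  rw [← map_inv, MonoidHom.coe_toHomUnits, MonoidHom.coe_toHomUnits, permMatrixHom_apply,
    permMatrixHom_apply, inv_inv, PEquiv.toMatrix_toPEquiv_mul, PEquiv.mul_toMatrix_toPEquiv,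
    Equiv.Perm.inv_def, Equiv.symm_symm, submatrix_submatrix, Function.comp_id,
    Function.id_comp, submatrix_diagonal_equiv]

theorem trace_eq_of_mem_orbit_conjAct [CommRing R] {x y : Matrix n n R}
    (h : y ∈ orbit (ConjAct (Matrix n n R)ˣ) x) : y.trace = x.trace := by
  obtain ⟨P, rfl⟩ := mem_orbit_conjAct_units_iff.1 h
  exact trace_units_conj P x

end Diagonal

section Blocks

variable {m n R : Type*} [Fintype m] [Fintype n] [DecidableEq m] [DecidableEq n] [CommRing R]

def fromBlocksDiagHom : Matrix m m R × Matrix n n R →* Matrix (m ⊕ n) (m ⊕ n) R where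
  toFun p := fromBlocks p.1 0 0 p.2
  map_one' := fromBlocks_one
  map_mul' p q := by simp [fromBlocks_multiply]

def unitsFromBlocksDiagHom :
    (Matrix m m R)ˣ × (Matrix n n R)ˣ →* (Matrix (m ⊕ n) (m ⊕ n) R)ˣ :=
  (Units.map fromBlocksDiagHom).comp MulEquiv.prodUnits.symm.toMonoidHom

theorem coe_unitsFromBlocksDiagHom (p : (Matrix m m R)ˣ × (Matrix n n R)ˣ) :
    (unitsFromBlocksDiagHom p : Matrix (m ⊕ n) (m ⊕ n) R) = fromBlocks ↑p.1 0 0 ↑p.2 :=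
  rfl

theorem unitsFromBlocksDiagHom_injective :
    Function.Injective (unitsFromBlocksDiagHom : (Matrix m m R)ˣ × (Matrix n n R)ˣ →* _) := by
  intro p q h
  obtain ⟨h₁, -, -, h₂⟩ := fromBlocks_inj.1 <| by
    simpa only [coe_unitsFromBlocksDiagHom] using congrArg Units.val h
  exact Prod.ext (Units.ext h₁) (Units.ext h₂)

variable (m n) in
abbrev scalarBlockDiagonal (a b : R) : Matrix (m ⊕ n) (m ⊕ n) R :=
  diagonal (Sum.elim (fun _ => a) fun _ => b)

variable [NoZeroDivisors R] {a b : R}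

theorem commute_scalarBlockDiagonal_iff (hab : a ≠ b) {M : Matrix (m ⊕ n) (m ⊕ n) R} :
    Commute M (scalarBlockDiagonal m n a b) ↔ M.toBlocks₁₂ = 0 ∧ M.toBlocks₂₁ = 0 := by
  rw [commute_diagonal_iff]
  refine ⟨fun h => ⟨ext fun i j => h _ _ hab, ext fun i j => h _ _ hab.symm⟩, ?_⟩
  rintro ⟨h₁₂, h₂₁⟩ (i | i) (j | j) hne
  · exact absurd rfl hne
  · exact congrFun₂ h₁₂ i j
  · exact congrFun₂ h₂₁ i j
  · exact absurd rfl hne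

theorem stabilizer_scalarBlockDiagonal (hab : a ≠ b) :
    stabilizer (ConjAct (Matrix (m ⊕ n) (m ⊕ n) R)ˣ) (scalarBlockDiagonal m n a b) =
      (ConjAct.toConjAct.toMonoidHom.comp unitsFromBlocksDiagHom).range := by
  ext g
  rw [mem_stabilizer_conjAct_units_iff, commute_scalarBlockDiagonal_iff hab, MonoidHom.mem_range]
  set u : Matrix (m ⊕ n) (m ⊕ n) R := ↑(ConjAct.ofConjAct g)
  constructor
  · rintro ⟨h₁₂, h₂₁⟩
    have hu : u = fromBlocks u.toBlocks₁₁ 0 0 u.toBlocks₂₂ := by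
      rw [← h₁₂, ← h₂₁, fromBlocks_toBlocks]
    have hdet := (isUnit_iff_isUnit_det u).1 (ConjAct.ofConjAct g).isUnit
    rw [hu, det_fromBlocks_zero₁₂, IsUnit.mul_iff, ← isUnit_iff_isUnit_det,
      ← isUnit_iff_isUnit_det] at hdet
    refine ⟨(hdet.1.unit, hdet.2.unit), ?_⟩
    rw [MonoidHom.comp_apply, MulEquiv.coe_toMonoidHom, ← ConjAct.toConjAct_ofConjAct g]
    exact congrArg _ (Units.ext hu.symm)
  · rintro ⟨p, rfl⟩
    simp [u, coe_unitsFromBlocksDiagHom]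

theorem card_stabilizer_scalarBlockDiagonal (hab : a ≠ b) :
    Nat.card (stabilizer (ConjAct (Matrix (m ⊕ n) (m ⊕ n) R)ˣ) (scalarBlockDiagonal m n a b)) =
      Nat.card (Matrix m m R)ˣ * Nat.card (Matrix n n R)ˣ := by
  rw [stabilizer_scalarBlockDiagonal hab, ← Nat.card_prod]
  exact Nat.card_congr (MonoidHom.ofInjective <|
    ConjAct.toConjAct.injective.comp unitsFromBlocksDiagHom_injective).toEquiv.symm

theorem ncard_orbit_scalarBlockDiagonal_mul (hab : a ≠ b) :
    (orbit (ConjAct (Matrix (m ⊕ n) (m ⊕ n) R)ˣ) (scalarBlockDiagonal m n a b)).ncard *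
        (Nat.card (Matrix m m R)ˣ * Nat.card (Matrix n n R)ˣ) =
      Nat.card (Matrix (m ⊕ n) (m ⊕ n) R)ˣ := by
  rw [← card_stabilizer_scalarBlockDiagonal hab, ← index_stabilizer, Subgroup.index_mul_card]
  exact Nat.card_congr ConjAct.ofConjAct.toEquiv

end Blocks

end Matrix

section FinThree

variable {F : Type*} [Field F] [Fintype F]

theorem card_GL_fin_three_eq_mul :
    Nat.card (GL (Fin 3) F) = (Fintype.card F ^ 4 + Fintype.card F ^ 3 + Fintype.card F ^ 2) *
      (Nat.card (GL (Fin 2) F) * Nat.card (GL (Fin 1) F)) := by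
  have hq : 1 ≤ Fintype.card F := Fintype.card_pos
  simp only [card_GL_field, Fin.prod_univ_three, Fin.prod_univ_two, Fin.prod_univ_one,
    Fin.val_zero, Fin.val_one, Fin.val_two, pow_zero, pow_one]
  generalize Fintype.card F = q at hq ⊢
  have h₁ : q ≤ q ^ 2 := Nat.le_self_pow two_ne_zero q
  have h₂ : q ^ 2 ≤ q ^ 3 := Nat.pow_le_pow_right hq (by norm_num)
  have h₃ : 1 ≤ q ^ 2 := Nat.one_le_pow _ _ hq
  zify [hq, h₁, h₂, h₃, h₁.trans h₂, h₃.trans h₂]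
  ring

theorem ncard_orbit_diagonal_fin_three {a b : F} (hab : a ≠ b) :
    (orbit (ConjAct (Matrix (Fin 3) (Fin 3) F)ˣ) (diagonal ![a, a, b])).ncard =
      Fintype.card F ^ 4 + Fintype.card F ^ 3 + Fintype.card F ^ 2 := by
  let e := (reindexAlgEquiv F F (finSumFinEquiv : Fin 2 ⊕ Fin 1 ≃ Fin 3)).toMulEquiv
  have he : e (scalarBlockDiagonal (Fin 2) (Fin 1) a b) = diagonal ![a, a, b] := by
    ext i j
    fin_cases i <;> fin_cases j <;> rfl
  have hGL : Nat.card (Matrix (Fin 2 ⊕ Fin 1) (Fin 2 ⊕ Fin 1) F)ˣ = Nat.card (GL (Fin 3) F) :=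
    Nat.card_congr (Units.mapEquiv e).toEquiv
  have key := ncard_orbit_scalarBlockDiagonal_mul (m := Fin 2) (n := Fin 1) hab
  rw [hGL, card_GL_fin_three_eq_mul] at key
  rw [← he, ← e.image_orbit_conjAct, Set.ncard_image_of_injective _ e.injective]
  exact Nat.eq_of_mul_eq_mul_right (Nat.mul_pos Nat.card_pos Nat.card_pos) key

end FinThree

theorem exists_perm_comp_eq_of_range_eq_pair {α : Type*} {a b : α} {d : Fin 3 → α}
    (hd : Set.range d = {a, b}) :
    ∃ σ : Equiv.Perm (Fin 3), d ∘ σ = ![a, a, b] ∨ d ∘ σ = ![b, b, a] := by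
  have hval (k : Fin 3) : d k = a ∨ d k = b := by
    simpa using hd.subset (Set.mem_range_self k)
  by_cases hab : a = b
  · subst hab
    exact ⟨1, .inl <| funext fun k => by fin_cases k <;> simpa using hval _⟩
  obtain ⟨i, hi⟩ : a ∈ Set.range d := hd ▸ Set.mem_insert a {b}
  obtain ⟨j, hj⟩ : b ∈ Set.range d := hd ▸ Set.mem_insert_of_mem a rfl
  rcases hval 0 with h₀ | h₀ <;> rcases hval 1 with h₁ | h₁ <;>
    rcases hval 2 with h₂ | h₂
  -- every non-constant pattern is sorted by the identity, `(1 2)` or `(0 2)`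
  all_goals first
    | (refine ⟨1, ?_⟩; simp [funext_iff, Fin.forall_fin_succ, *]; done)
    | (refine ⟨.swap 1 2, ?_⟩
       simp [funext_iff, Fin.forall_fin_succ, Equiv.swap_apply_of_ne_of_ne, *]; done)
    | (refine ⟨.swap 0 2, ?_⟩
       simp [funext_iff, Fin.forall_fin_succ, Equiv.swap_apply_of_ne_of_ne, *]; done)
    | (exfalso; fin_cases i <;> fin_cases j <;> simp_all)

section Decomposition

variable {R : Type*} [CommRing R] {a b : R}

theorem setOf_conj_diagonal_range_eq_pair_eq_union :
    {A : Matrix (Fin 3) (Fin 3) R | ∃ (d : Fin 3 → R) (P : (Matrix (Fin 3) (Fin 3) R)ˣ),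
        Set.range d = {a, b} ∧
          A = (P : Matrix (Fin 3) (Fin 3) R) * diagonal d *
            ((P⁻¹ : _) : Matrix (Fin 3) (Fin 3) R)} =
      orbit (ConjAct (Matrix (Fin 3) (Fin 3) R)ˣ) (diagonal ![a, a, b]) ∪
        orbit (ConjAct (Matrix (Fin 3) (Fin 3) R)ˣ) (diagonal ![b, b, a]) := by
  ext A
  simp only [Set.mem_ofPred_eq, Set.mem_union]
  constructor
  · rintro ⟨d, P, hd, rfl⟩
    have hA : _ ∈ orbit (ConjAct _) (diagonal d) := mem_orbit_conjAct_units_iff.2 ⟨P, rfl⟩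
    obtain ⟨σ, hσ | hσ⟩ := exists_perm_comp_eq_of_range_eq_pair hd <;>
      [left; right] <;>
      rwa [← hσ, orbit_eq_iff.2 (diagonal_comp_perm_mem_orbit d σ)]
  · have hrange (x y : R) : Set.range ![x, x, y] = {y, x} := by simp [range_cons]
    rintro (h | h) <;> obtain ⟨P, rfl⟩ := mem_orbit_conjAct_units_iff.1 h
    · exact ⟨_, P, (hrange a b).trans (Set.pair_comm b a), rfl⟩
    · exact ⟨_, P, hrange b a, rfl⟩

theorem disjoint_orbit_diagonal_fin_three (hab : a ≠ b) :
    Disjoint (orbit (ConjAct (Matrix (Fin 3) (Fin 3) R)ˣ) (diagonal ![a, a, b]))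
      (orbit (ConjAct (Matrix (Fin 3) (Fin 3) R)ˣ) (diagonal ![b, b, a])) := by
  refine Set.disjoint_left.2 fun A h₁ h₂ => hab ?_
  have htr := (trace_eq_of_mem_orbit_conjAct h₁).symm.trans (trace_eq_of_mem_orbit_conjAct h₂)
  simp only [trace_diagonal, Fin.sum_univ_three, cons_val_zero, cons_val_one, cons_val]
    at htr
  linear_combination htr

end Decomposition

theorem stmt_6_general (F : Type) [Field F] [Fintype F]
    (q : ℕ) (hq : Fintype.card F = q) (α₁ α₂ : F) (hα : α₁ ≠ α₂) :
    Nat.card {A : Matrix (Fin 3) (Fin 3) F //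
        ∃ (d : Fin 3 → F) (P : (Matrix (Fin 3) (Fin 3) F)ˣ),
          Set.range d = {α₁, α₂} ∧
          A = (P : Matrix (Fin 3) (Fin 3) F) * Matrix.diagonal d *
              ((P⁻¹ : _) : Matrix (Fin 3) (Fin 3) F)} =
      2 * q ^ 4 + 2 * q ^ 3 + 2 * q ^ 2 := by
  subst hq
  rw [← Set.coe_ofPred, Nat.card_coe_set_eq, setOf_conj_diagonal_range_eq_pair_eq_union,
    Set.ncard_union_eq (disjoint_orbit_diagonal_fin_three hα), ncard_orbit_diagonal_fin_three hα,
    ncard_orbit_diagonal_fin_three hα.symm]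
  ring

/-- The number of `3 × 3` matrices over a finite field with `q` elements that are
diagonalizable with eigenvalue set exactly `{α₁, α₂}` (with `α₁ ≠ α₂`) equals
`2q⁴ + 2q³ + 2q²`. -/
theorem stmt_6 (F : Type) [Field F] [Fintype F] [DecidableEq F]
    (q : ℕ) (hq : Fintype.card F = q) (α₁ α₂ : F) (hα : α₁ ≠ α₂) :
    Nat.card {A : Matrix (Fin 3) (Fin 3) F //
        ∃ (d : Fin 3 → F) (P : (Matrix (Fin 3) (Fin 3) F)ˣ),
          Set.range d = {α₁, α₂} ∧
          A = (P : Matrix (Fin 3) (Fin 3) F) * Matrix.diagonal d *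
              ((P⁻¹ : _) : Matrix (Fin 3) (Fin 3) F)} =
      2 * q ^ 4 + 2 * q ^ 3 + 2 * q ^ 2 :=
  stmt_6_general F q hq α₁ α₂ hα
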